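/- arXiv:1211.1123 — 2 statements merged into one kernel-verified Lean document; each statement's English description precedes it below -/
import Mathlib

section
/- Global convergence of the descent algorithm (core of Theorem 3.1): Under assumptions (H1) and (H2), let λ ∈ (0,1), r > 0, x₀ ∈ S, and suppose Φ̃ := {x ∈ Φ : θ(x) ≤ θ(x₀)} is nonempty. Let (x_i)_{i≥0} be a sequence in S with θ(x_i) ≤ θ(x₀) for all i, and (s_i)_{i≥0} ⊆ [0, r] satisfy θ(x_{i+1}) ≤ θ(x_i) + λ s_i ∇θ(x_i)F(x_i) for all i. Assume in addition that for every η > 0 there exists δ_η > 0 such that for every i with x_i ∉ Φ and dist(x_i, Φ̃) ≥ η one has s_i ≥ δ_η. Then every accumulation point x* of the sequence (x_i) satisfies x* ∈ Φ. -/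
open Matrix Set Filter

noncomputable section

/-- The gradient of `f : ℝⁿ → ℝ` at `x`, as the vector of partial derivatives. -/
def grad {n : ℕ} (f : (Fin n → ℝ) → ℝ) (x : Fin n → ℝ) : Fin n → ℝ :=
  fun j => fderiv ℝ f x (Pi.single j 1)

/-- The feasible set `S`. -/
def feas {n m k : ℕ} (h : Fin m → (Fin n → ℝ) → ℝ) (g : Fin k → (Fin n → ℝ) → ℝ) :
    Set (Fin n → ℝ) :=
  {x | (∀ i, h i x = 0) ∧ (∀ j, g j x ≤ 0)}

/-- Jacobian of the equality constraints (rows `∇h_i(x)`). -/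
def matA {n m : ℕ} (h : Fin m → (Fin n → ℝ) → ℝ) (x : Fin n → ℝ) :
    Matrix (Fin m) (Fin n) ℝ :=
  Matrix.of fun i => grad (h i) x

/-- Jacobian of the inequality constraints (rows `∇g_j(x)`). -/
def matB {n k : ℕ} (g : Fin k → (Fin n → ℝ) → ℝ) (x : Fin n → ℝ) :
    Matrix (Fin k) (Fin n) ℝ :=
  Matrix.of fun j => grad (g j) x

/-- `H(x) = I − Aᵀ(AAᵀ)⁻¹A`. -/
def matH {n m : ℕ} (h : Fin m → (Fin n → ℝ) → ℝ) (x : Fin n → ℝ) :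
    Matrix (Fin n) (Fin n) ℝ :=
  1 - (matA h x)ᵀ * (matA h x * (matA h x)ᵀ)⁻¹ * matA h x

/-- `Q(x) = B(x)H(x)B(x)ᵀ − diag(g(x))`. -/
def matQ {n m k : ℕ} (h : Fin m → (Fin n → ℝ) → ℝ) (g : Fin k → (Fin n → ℝ) → ℝ)
    (x : Fin n → ℝ) : Matrix (Fin k) (Fin k) ℝ :=
  matB g x * matH h x * (matB g x)ᵀ - Matrix.diagonal (fun j => g j x)

/-- Assumption (H1). -/
def hypH1 {n m k : ℕ} (θ : (Fin n → ℝ) → ℝ) (h : Fin m → (Fin n → ℝ) → ℝ)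
    (g : Fin k → (Fin n → ℝ) → ℝ) : Prop :=
  (feas h g).Nonempty ∧ ∀ x₀ ∈ feas h g, IsCompact {x ∈ feas h g | θ x ≤ θ x₀}

/-- Assumption (H2). -/
def hypH2 {n m k : ℕ} (h : Fin m → (Fin n → ℝ) → ℝ) (g : Fin k → (Fin n → ℝ) → ℝ) : Prop :=
  ∀ x ∈ feas h g,
    LinearIndependent ℝ
      (Sum.elim (fun i : Fin m => grad (h i) x)
        (fun j : {j : Fin k // g j x = 0} => grad (g (j : Fin k)) x))

/-- `P(x) = Q(x)⁻¹ B(x) H(x)`. -/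
def matP {n m k : ℕ} (h : Fin m → (Fin n → ℝ) → ℝ) (g : Fin k → (Fin n → ℝ) → ℝ)
    (x : Fin n → ℝ) : Matrix (Fin k) (Fin n) ℝ :=
  (matQ h g x)⁻¹ * matB g x * matH h x

/-- `v(x) = P(x)(∇θ(x))ᵀ`. -/
def vecv {n m k : ℕ} (θ : (Fin n → ℝ) → ℝ) (h : Fin m → (Fin n → ℝ) → ℝ)
    (g : Fin k → (Fin n → ℝ) → ℝ) (x : Fin n → ℝ) : Fin k → ℝ :=
  (matP h g x).mulVec (grad θ x)

/-- componentwise positive part. -/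
def pPart {k : ℕ} (w : Fin k → ℝ) : Fin k → ℝ := fun j => max 0 (w j)

/-- `R₃(x)`. -/
def matR3 {n k : ℕ} (b c : Fin k → (Fin n → ℝ) → ℝ) (p : Fin k → ℕ) (x : Fin n → ℝ)
    (v : Fin k → ℝ) : Matrix (Fin k) (Fin k) ℝ :=
  Matrix.diagonal (fun j => b j x + c j x * (max 0 (v j)) ^ (2 * p j))

/-- The vector field `F(x)` of (2.4), (2.5). -/
def vecF {n m k : ℕ} (θ : (Fin n → ℝ) → ℝ) (h : Fin m → (Fin n → ℝ) → ℝ)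
    (g : Fin k → (Fin n → ℝ) → ℝ)
    (R1 : (Fin n → ℝ) → Matrix (Fin n) (Fin n) ℝ)
    (R2 : (Fin n → ℝ) → Matrix (Fin k) (Fin k) ℝ)
    (a b c : Fin k → (Fin n → ℝ) → ℝ) (p : Fin k → ℕ) (x : Fin n → ℝ) : Fin n → ℝ :=
  -(((matH h x - (matP h g x)ᵀ * matQ h g x * matP h g x) * R1 x *
      (matH h x - (matP h g x)ᵀ * matQ h g x * matP h g x)).mulVec (grad θ x))
  - ((matP h g x)ᵀ * Matrix.diagonal (fun j => g j x) *
      (R2 x * Matrix.diagonal (fun j => g j x) - Matrix.diagonal (fun j => a j x))).mulVec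
        (vecv θ h g x)
  - ((matP h g x)ᵀ * matR3 b c p x (vecv θ h g x)).mulVec (pPart (vecv θ h g x))

/-- The set `Φ` of KKT points. -/
def KKTset {n m k : ℕ} (θ : (Fin n → ℝ) → ℝ) (h : Fin m → (Fin n → ℝ) → ℝ)
    (g : Fin k → (Fin n → ℝ) → ℝ) : Set (Fin n → ℝ) :=
  {x | x ∈ feas h g ∧ ∃ (lam : Fin m → ℝ) (mu : Fin k → ℝ),
    (∀ j, 0 ≤ mu j) ∧
    grad θ x + (∑ i, lam i • grad (h i) x) + (∑ j, mu j • grad (g j) x) = 0 ∧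
    (∑ j, mu j * g j x) = 0}


open Topology

/-!
On the feasible set the rate of descent `G(x) = ∇θ(x) F(x)` splits into four sign-definite terms,
`G = -u ⬝ R₁ u - w ⬝ R₂ w + ∑ aⱼ gⱼ vⱼ² - ∑ (bⱼ + cⱼ (vⱼ⁺)^(2pⱼ)) (vⱼ⁺)²` with
`u = H (∇θ - Bᵀ v)` and `w = diag(g) v`. Hence `G ≤ 0`, and `G(x) = 0` exactly when `x` is a KKT
point with multipliers `μ = -v(x)`; since (H2) makes `AAᵀ` and `Q` invertible on `S`, every KKT
point has these multipliers, and `G` is continuous on `S`.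
If an accumulation point `x*` had `G(x*) < 0`, the iterates close to `x*` would stay a fixed
distance away from the KKT points, so their steps would be bounded below and `θ` would drop by a
fixed amount at each of infinitely many visits, contradicting the convergence of the decreasing
sequence `θ(xᵢ)`.
-/

section rows

variable {m n : Type*} [Fintype m]

lemma transpose_mulVec_eq_sum (A : Matrix m n ℝ) (c : m → ℝ) : Aᵀ *ᵥ c = ∑ i, c i • A i := by
  rw [mulVec_transpose, vecMul_eq_sum]

lemma posDef_mul_transpose_self [Fintype n] {A : Matrix m n ℝ} (hA : LinearIndependent ℝ A.row) :
    (A * Aᵀ).PosDef := by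
  simpa using PosDef.mul_conjTranspose_self A (vecMul_injective_iff.mpr hA)

end rows

def kerProj {m n : Type*} [Fintype m] [DecidableEq m] [Fintype n] [DecidableEq n]
    (A : Matrix m n ℝ) : Matrix n n ℝ :=
  1 - Aᵀ * (A * Aᵀ)⁻¹ * A

lemma matH_eq_kerProj {n m : ℕ} (h : Fin m → (Fin n → ℝ) → ℝ) (x : Fin n → ℝ) :
    matH h x = kerProj (matA h x) := rfl

section kerProj

variable {m n k : Type*} [Fintype m] [DecidableEq m] [Fintype n] [DecidableEq n]
  [Fintype k] [DecidableEq k] {A : Matrix m n ℝ}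

lemma transpose_kerProj (A : Matrix m n ℝ) : (kerProj A)ᵀ = kerProj A := by
  simp only [kerProj, transpose_sub, transpose_one, transpose_mul, transpose_transpose,
    transpose_nonsing_inv, Matrix.mul_assoc]

lemma kerProj_mul_transpose (hA : IsUnit (A * Aᵀ).det) : kerProj A * Aᵀ = 0 := by
  rw [kerProj, Matrix.sub_mul, Matrix.one_mul, Matrix.mul_assoc, Matrix.mul_assoc,
    nonsing_inv_mul _ hA, Matrix.mul_one, sub_self]

lemma mul_kerProj (hA : IsUnit (A * Aᵀ).det) : A * kerProj A = 0 := by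
  rw [kerProj, Matrix.mul_sub, Matrix.mul_one, ← Matrix.mul_assoc, ← Matrix.mul_assoc,
    mul_nonsing_inv _ hA, Matrix.one_mul, sub_self]

lemma kerProj_mul_self (hA : IsUnit (A * Aᵀ).det) : kerProj A * kerProj A = kerProj A := by
  conv_lhs => enter [1]; rw [kerProj]
  rw [Matrix.sub_mul, Matrix.one_mul, Matrix.mul_assoc, mul_kerProj hA, Matrix.mul_zero,
    sub_zero]

lemma dotProduct_kerProj_mulVec (hA : IsUnit (A * Aᵀ).det) (w : n → ℝ) :
    w ⬝ᵥ kerProj A *ᵥ w = (kerProj A *ᵥ w) ⬝ᵥ (kerProj A *ᵥ w) := by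
  conv_lhs => rw [← kerProj_mul_self hA, ← mulVec_mulVec]
  rw [dotProduct_mulVec, ← mulVec_transpose, transpose_kerProj]

lemma kerProj_mulVec_eq_zero_iff (hA : IsUnit (A * Aᵀ).det) {w : n → ℝ} :
    kerProj A *ᵥ w = 0 ↔ ∃ c, w = Aᵀ *ᵥ c := by
  constructor
  · intro hw
    refine ⟨(A * Aᵀ)⁻¹ *ᵥ (A *ᵥ w), ?_⟩
    rwa [kerProj, sub_mulVec, one_mulVec, ← mulVec_mulVec, ← mulVec_mulVec, sub_eq_zero] at hw
  · rintro ⟨c, rfl⟩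
    rw [mulVec_mulVec, kerProj_mul_transpose hA, zero_mulVec]

lemma dotProduct_mul_kerProj_mul_transpose_sub_diagonal_mulVec (hA : IsUnit (A * Aᵀ).det)
    (B : Matrix k n ℝ) (γ z : k → ℝ) :
    z ⬝ᵥ (B * kerProj A * Bᵀ - diagonal γ) *ᵥ z
      = (kerProj A *ᵥ (Bᵀ *ᵥ z)) ⬝ᵥ (kerProj A *ᵥ (Bᵀ *ᵥ z)) - ∑ j, γ j * (z j * z j) := by
  rw [sub_mulVec, dotProduct_sub, ← dotProduct_kerProj_mulVec hA, ← mulVec_mulVec,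
    ← mulVec_mulVec, dotProduct_mulVec, ← mulVec_transpose]
  simp only [dotProduct, mulVec_diagonal]
  congr 1
  exact Finset.sum_congr rfl fun j _ => by ring

/-- The quadratic form splits into `|H Bᵀ z|²` and `∑ (-γⱼ) zⱼ²`; if it vanishes, `z` is
supported on the active indices `γⱼ = 0` and `Bᵀ z ∈ range Aᵀ`, a linear dependence among the
rows of `A` and the active rows of `B`. -/
lemma posDef_mul_kerProj_mul_transpose_sub_diagonal {B : Matrix k n ℝ} {γ : k → ℝ}
    (hγ : ∀ j, γ j ≤ 0)
    (hli : LinearIndependent ℝ (Sum.elim A.row fun j : {j // γ j = 0} => B j)) :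
    (B * kerProj A * Bᵀ - diagonal γ).PosDef := by
  have hA : IsUnit (A * Aᵀ).det :=
    (posDef_mul_transpose_self (hli.comp Sum.inl Sum.inl_injective)).det_pos.ne'.isUnit
  refine PosDef.of_dotProduct_mulVec_pos ?_ fun z hz => ?_
  · rw [IsHermitian, conjTranspose_eq_transpose_of_trivial, transpose_sub, transpose_mul,
      transpose_mul, transpose_transpose, transpose_kerProj, diagonal_transpose, Matrix.mul_assoc]
  rw [star_trivial, dotProduct_mul_kerProj_mul_transpose_sub_diagonal_mulVec hA]
  by_contra! hle
  set u := kerProj A *ᵥ (Bᵀ *ᵥ z)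
  have hterm : ∀ j ∈ Finset.univ, γ j * (z j * z j) ≤ 0 := fun j _ =>
    mul_nonpos_of_nonpos_of_nonneg (hγ j) (mul_self_nonneg _)
  have hu_nonneg : 0 ≤ u ⬝ᵥ u := Finset.sum_nonneg fun i _ => mul_self_nonneg _
  have hsum := Finset.sum_nonpos hterm
  have hu : u = 0 := dotProduct_self_eq_zero.mp (by linarith)
  have hinactive : ∀ j, γ j ≠ 0 → z j = 0 := fun j hj => by
    have := (Finset.sum_eq_zero_iff_of_nonpos hterm).mp (by linarith) j (Finset.mem_univ j)
    simpa [hj] using this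
  obtain ⟨c, hc⟩ := (kerProj_mulVec_eq_zero_iff hA).mp hu
  have hinactive_sum : ∑ j : {j // γ j ≠ 0}, z j • B j = 0 :=
    Finset.sum_eq_zero fun j _ => by rw [hinactive j j.2, zero_smul]
  have hactive : ∑ j : {j // γ j = 0}, z j • B j = ∑ i, c i • A i := by
    rw [← transpose_mulVec_eq_sum, ← hc, transpose_mulVec_eq_sum,
      ← Fintype.sum_subtype_add_sum_subtype (fun j => γ j = 0) (fun j => z j • B j),
      hinactive_sum, add_zero]
  have hcoef := Fintype.linearIndependent_iff.mp hli (Sum.elim (-c) fun j => z j) <| by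
    rw [Fintype.sum_sum_type]
    change ∑ i, -c i • A i + ∑ j : {j // γ j = 0}, z j • B j = 0
    simp only [neg_smul, Finset.sum_neg_distrib, hactive, neg_add_cancel]
  refine hz (funext fun j => ?_)
  by_cases hj : γ j = 0
  · exact hcoef (Sum.inr ⟨j, hj⟩)
  · exact hinactive j hj

end kerProj

lemma eq_zero_of_dotProduct_mulVec_self_eq_zero {ι : Type*} [Fintype ι] {M : Matrix ι ι ℝ}
    (hM : M.PosDef) {u : ι → ℝ} (hu : u ⬝ᵥ M *ᵥ u = 0) : u = 0 := by
  by_contra hne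
  have := hM.dotProduct_mulVec_pos hne
  rw [star_trivial, hu] at this
  exact lt_irrefl 0 this

lemma mul_max_zero_self (t : ℝ) : t * max 0 t = max 0 t ^ 2 := by
  rcases le_total t 0 with ht | ht
  · simp [max_eq_left ht]
  · rw [max_eq_right ht, sq]

lemma nonpos_of_penalty_eq_zero {β γ t : ℝ} (hβ : 0 ≤ β) (hγ : 0 ≤ γ) (hβγ : 0 < β + γ)
    (q : ℕ) (ht : (β + γ * max 0 t ^ (2 * q)) * max 0 t ^ 2 = 0) : t ≤ 0 := by
  by_contra! htpos
  rw [max_eq_right htpos.le] at ht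
  have hcoef : 0 < β + γ * t ^ (2 * q) := by
    rcases hβ.eq_or_lt with hβ0 | hβpos
    · rw [← hβ0, zero_add] at hβγ ⊢
      positivity
    · positivity
  exact (mul_pos hcoef (by positivity)).ne' ht

section vecF

variable {n m k : ℕ} {θ : (Fin n → ℝ) → ℝ} {h : Fin m → (Fin n → ℝ) → ℝ}
  {g : Fin k → (Fin n → ℝ) → ℝ} {x : Fin n → ℝ}
  {R1 : (Fin n → ℝ) → Matrix (Fin n) (Fin n) ℝ} {R2 : (Fin n → ℝ) → Matrix (Fin k) (Fin k) ℝ}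
  {a b c : Fin k → (Fin n → ℝ) → ℝ} {p : Fin k → ℕ}

/-- The gradient of the Lagrangian with multipliers `μ = -v(x)`, projected by `H(x)`. -/
def projGradLagrangian (θ : (Fin n → ℝ) → ℝ) (h : Fin m → (Fin n → ℝ) → ℝ)
    (g : Fin k → (Fin n → ℝ) → ℝ) (x : Fin n → ℝ) : Fin n → ℝ :=
  matH h x *ᵥ (grad θ x - (matB g x)ᵀ *ᵥ vecv θ h g x)

lemma matA_transpose_mulVec (c : Fin m → ℝ) :
    (matA h x)ᵀ *ᵥ c = ∑ i, c i • grad (h i) x :=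
  transpose_mulVec_eq_sum _ _

lemma matB_transpose_mulVec (z : Fin k → ℝ) :
    (matB g x)ᵀ *ᵥ z = ∑ j, z j • grad (g j) x :=
  transpose_mulVec_eq_sum _ _

lemma transpose_matQ : (matQ h g x)ᵀ = matQ h g x := by
  rw [matQ, matH_eq_kerProj, transpose_sub, transpose_mul, transpose_mul, transpose_transpose,
    transpose_kerProj, diagonal_transpose, Matrix.mul_assoc]

lemma transpose_matH_sub : (matH h x - (matP h g x)ᵀ * matQ h g x * matP h g x)ᵀ
    = matH h x - (matP h g x)ᵀ * matQ h g x * matP h g x := by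
  rw [transpose_sub, matH_eq_kerProj, transpose_kerProj, transpose_mul, transpose_mul,
    transpose_transpose, transpose_matQ, Matrix.mul_assoc]

lemma matP_transpose_mul_matQ (hQ : IsUnit (matQ h g x).det) :
    (matP h g x)ᵀ * matQ h g x = matH h x * (matB g x)ᵀ := by
  rw [matP, transpose_mul, transpose_mul, transpose_nonsing_inv, transpose_matQ, matH_eq_kerProj,
    transpose_kerProj, Matrix.mul_assoc, Matrix.mul_assoc, nonsing_inv_mul _ hQ, Matrix.mul_one]

lemma matH_sub_mulVec_grad (hQ : IsUnit (matQ h g x).det) :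
    (matH h x - (matP h g x)ᵀ * matQ h g x * matP h g x) *ᵥ grad θ x
      = projGradLagrangian θ h g x := by
  rw [matP_transpose_mul_matQ hQ, sub_mulVec, projGradLagrangian, mulVec_sub, ← mulVec_mulVec,
    ← mulVec_mulVec]
  rfl

lemma grad_dotProduct_matP_transpose_mul_mulVec (X : Matrix (Fin k) (Fin k) ℝ)
    (w : Fin k → ℝ) :
    grad θ x ⬝ᵥ ((matP h g x)ᵀ * X) *ᵥ w = vecv θ h g x ⬝ᵥ X *ᵥ w := by
  rw [← mulVec_mulVec, dotProduct_mulVec, vecMul_transpose]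
  rfl

lemma grad_dotProduct_vecF (hQ : IsUnit (matQ h g x).det) :
    grad θ x ⬝ᵥ vecF θ h g R1 R2 a b c p x
      = -(projGradLagrangian θ h g x ⬝ᵥ R1 x *ᵥ projGradLagrangian θ h g x)
        - ((fun j => g j x * vecv θ h g x j) ⬝ᵥ R2 x *ᵥ fun j => g j x * vecv θ h g x j)
        + ∑ j, a j x * g j x * vecv θ h g x j ^ 2
        - ∑ j, (b j x + c j x * max 0 (vecv θ h g x j) ^ (2 * p j))
            * max 0 (vecv θ h g x j) ^ 2 := by
  have hM := transpose_matH_sub (h := h) (g := g) (x := x)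
  set M := matH h x - (matP h g x)ᵀ * matQ h g x * matP h g x
  set v := vecv θ h g x
  have hterm₁ : grad θ x ⬝ᵥ (M * R1 x * M) *ᵥ grad θ x
      = projGradLagrangian θ h g x ⬝ᵥ R1 x *ᵥ projGradLagrangian θ h g x := by
    rw [← mulVec_mulVec, ← mulVec_mulVec, dotProduct_mulVec, ← mulVec_transpose, hM,
      matH_sub_mulVec_grad hQ]
  have hterm₂ : grad θ x ⬝ᵥ ((matP h g x)ᵀ * diagonal (fun j => g j x) *
        (R2 x * diagonal (fun j => g j x) - diagonal (fun j => a j x))) *ᵥ v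
      = ((fun j => g j x * v j) ⬝ᵥ R2 x *ᵥ fun j => g j x * v j)
        - ∑ j, a j x * g j x * v j ^ 2 := by
    have hgv : diagonal (fun j => g j x) *ᵥ v = fun j => g j x * v j :=
      funext fun j => mulVec_diagonal _ _ j
    rw [Matrix.mul_assoc, grad_dotProduct_matP_transpose_mul_mulVec, ← mulVec_mulVec,
      sub_mulVec, ← mulVec_mulVec, hgv]
    simp only [dotProduct, mulVec_diagonal, Pi.sub_apply, ← Finset.sum_sub_distrib]
    exact Finset.sum_congr rfl fun j _ => by ring
  have hterm₃ : grad θ x ⬝ᵥ ((matP h g x)ᵀ * matR3 b c p x v) *ᵥ pPart v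
      = ∑ j, (b j x + c j x * max 0 (v j) ^ (2 * p j)) * max 0 (v j) ^ 2 := by
    rw [grad_dotProduct_matP_transpose_mul_mulVec, matR3]
    simp only [dotProduct, mulVec_diagonal, pPart]
    exact Finset.sum_congr rfl fun j _ => by rw [← mul_max_zero_self]; ring
  rw [vecF, dotProduct_sub, dotProduct_sub, dotProduct_neg, hterm₁, hterm₂, hterm₃]
  ring

end vecF

section KKT

variable {n m k : ℕ} {θ : (Fin n → ℝ) → ℝ} {h : Fin m → (Fin n → ℝ) → ℝ}
  {g : Fin k → (Fin n → ℝ) → ℝ} {x : Fin n → ℝ}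
  {R1 : (Fin n → ℝ) → Matrix (Fin n) (Fin n) ℝ} {R2 : (Fin n → ℝ) → Matrix (Fin k) (Fin k) ℝ}
  {a b c : Fin k → (Fin n → ℝ) → ℝ} {p : Fin k → ℕ}

/-- The KKT conditions at `x` with inequality multipliers `μ = -v(x)`, the equality
multipliers being eliminated by the projection `H(x)`. -/
def IsKKTWithNegV (θ : (Fin n → ℝ) → ℝ) (h : Fin m → (Fin n → ℝ) → ℝ)
    (g : Fin k → (Fin n → ℝ) → ℝ) (x : Fin n → ℝ) : Prop :=
  projGradLagrangian θ h g x = 0 ∧ ∀ j, vecv θ h g x j ≤ 0 ∧ g j x * vecv θ h g x j = 0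

/-- Complementarity kills `diag(g) μ`, so `Q μ = B H Bᵀ μ = -B H ∇θ`. -/
lemma vecv_eq_neg_of_stationary (hA : IsUnit (matA h x * (matA h x)ᵀ).det)
    (hQ : IsUnit (matQ h g x).det) {lam : Fin m → ℝ} {mu : Fin k → ℝ}
    (hstat : grad θ x + (matA h x)ᵀ *ᵥ lam + (matB g x)ᵀ *ᵥ mu = 0)
    (hcompl : ∀ j, mu j * g j x = 0) :
    vecv θ h g x = -mu := by
  have hgrad : grad θ x = -((matA h x)ᵀ *ᵥ lam) - (matB g x)ᵀ *ᵥ mu := by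
    rw [add_assoc, add_eq_zero_iff_eq_neg] at hstat
    rw [hstat, neg_add, sub_eq_add_neg]
  have hHgrad : matH h x *ᵥ grad θ x = -(matH h x *ᵥ ((matB g x)ᵀ *ᵥ mu)) := by
    rw [hgrad, mulVec_sub, mulVec_neg, mulVec_mulVec, matH_eq_kerProj,
      kerProj_mul_transpose hA, zero_mulVec, neg_zero, zero_sub]
  have hdiag : diagonal (fun j => g j x) *ᵥ mu = 0 :=
    funext fun j => by rw [mulVec_diagonal, mul_comm, hcompl j, Pi.zero_apply]
  have hQmu : matB g x *ᵥ (matH h x *ᵥ ((matB g x)ᵀ *ᵥ mu)) = matQ h g x *ᵥ mu := by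
    rw [matQ, sub_mulVec, hdiag, sub_zero, mulVec_mulVec, mulVec_mulVec]
  rw [vecv, matP, ← mulVec_mulVec, ← mulVec_mulVec, hHgrad, mulVec_neg, hQmu, mulVec_neg,
    mulVec_mulVec, nonsing_inv_mul _ hQ, one_mulVec]

lemma mem_KKTset_iff (hx : x ∈ feas h g) (hA : IsUnit (matA h x * (matA h x)ᵀ).det)
    (hQ : IsUnit (matQ h g x).det) :
    x ∈ KKTset θ h g ↔ IsKKTWithNegV θ h g x := by
  constructor
  · rintro ⟨-, lam, mu, hmu, hstat, hcompl⟩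
    rw [← matA_transpose_mulVec, ← matB_transpose_mulVec] at hstat
    have hcompl' : ∀ j, mu j * g j x = 0 := fun j =>
      (Finset.sum_eq_zero_iff_of_nonpos fun j _ => mul_nonpos_of_nonneg_of_nonpos (hmu j)
        (hx.2 j)).mp hcompl j (Finset.mem_univ j)
    have hv := vecv_eq_neg_of_stationary hA hQ hstat hcompl'
    refine ⟨?_, fun j => ⟨?_, ?_⟩⟩
    · rw [add_right_comm, add_eq_zero_iff_eq_neg] at hstat
      rw [projGradLagrangian, hv, mulVec_neg, sub_neg_eq_add, hstat, mulVec_neg, mulVec_mulVec,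
        matH_eq_kerProj, kerProj_mul_transpose hA, zero_mulVec, neg_zero]
    · simpa [hv] using hmu j
    · rw [hv, Pi.neg_apply, mul_neg, mul_comm, hcompl' j, neg_zero]
  · rintro ⟨hproj, hv⟩
    obtain ⟨c, hc⟩ := (kerProj_mulVec_eq_zero_iff hA).mp hproj
    refine ⟨hx, -c, -vecv θ h g x, fun j => neg_nonneg.mpr (hv j).1, ?_, ?_⟩
    · rw [← matA_transpose_mulVec, ← matB_transpose_mulVec, mulVec_neg, mulVec_neg, ← hc]
      abel
    · exact Finset.sum_eq_zero fun j _ => by rw [Pi.neg_apply, neg_mul, mul_comm, (hv j).2,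
        neg_zero]

lemma grad_dotProduct_vecF_nonpos (hx : x ∈ feas h g) (hQ : IsUnit (matQ h g x).det)
    (hR1 : (R1 x).PosSemidef) (hR2 : (R2 x).PosSemidef) (ha : ∀ j, 0 ≤ a j x)
    (hb : ∀ j, 0 ≤ b j x) (hc : ∀ j, 0 ≤ c j x) :
    grad θ x ⬝ᵥ vecF θ h g R1 R2 a b c p x ≤ 0 := by
  rw [grad_dotProduct_vecF hQ]
  have h₁ := hR1.dotProduct_mulVec_nonneg (projGradLagrangian θ h g x)
  have h₂ := hR2.dotProduct_mulVec_nonneg fun j => g j x * vecv θ h g x j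
  have h₃ : ∑ j, a j x * g j x * vecv θ h g x j ^ 2 ≤ 0 := Finset.sum_nonpos fun j _ =>
    mul_nonpos_of_nonpos_of_nonneg (mul_nonpos_of_nonneg_of_nonpos (ha j) (hx.2 j)) (sq_nonneg _)
  have h₄ : 0 ≤ ∑ j, (b j x + c j x * max 0 (vecv θ h g x j) ^ (2 * p j))
      * max 0 (vecv θ h g x j) ^ 2 := Finset.sum_nonneg fun j _ => by
    have := hb j; have := hc j; positivity
  rw [star_trivial] at h₁ h₂
  linarith

lemma isKKTWithNegV_of_grad_dotProduct_vecF_eq_zero (hx : x ∈ feas h g)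
    (hQ : IsUnit (matQ h g x).det) (hR1 : (R1 x).PosDef) (hR2 : (R2 x).PosSemidef)
    (ha : ∀ j, 0 ≤ a j x) (hb : ∀ j, 0 ≤ b j x) (hc : ∀ j, 0 ≤ c j x)
    (hbc : ∀ j, 0 < b j x + c j x)
    (hpd : (R2 x).PosDef ∨ (diagonal fun j => a j x).PosDef)
    (hG : grad θ x ⬝ᵥ vecF θ h g R1 R2 a b c p x = 0) :
    IsKKTWithNegV θ h g x := by
  rw [grad_dotProduct_vecF hQ] at hG
  set v := vecv θ h g x
  set w : Fin k → ℝ := fun j => g j x * v j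
  set u := projGradLagrangian θ h g x
  have h₁ := hR1.posSemidef.dotProduct_mulVec_nonneg u
  have h₂ := hR2.dotProduct_mulVec_nonneg w
  have h₃ : ∀ j ∈ Finset.univ, a j x * g j x * v j ^ 2 ≤ 0 := fun j _ =>
    mul_nonpos_of_nonpos_of_nonneg (mul_nonpos_of_nonneg_of_nonpos (ha j) (hx.2 j)) (sq_nonneg _)
  have h₄ : ∀ j ∈ Finset.univ, 0 ≤ (b j x + c j x * max 0 (v j) ^ (2 * p j)) * max 0 (v j) ^ 2 :=
    fun j _ => by have := hb j; have := hc j; positivity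
  have s₃ := Finset.sum_nonpos h₃
  have s₄ := Finset.sum_nonneg h₄
  rw [star_trivial] at h₁ h₂
  have hv : ∀ j, v j ≤ 0 := fun j => nonpos_of_penalty_eq_zero (hb j) (hc j) (hbc j) (p j)
    ((Finset.sum_eq_zero_iff_of_nonneg h₄).mp (by linarith) j (Finset.mem_univ j))
  have hw : w = 0 := by
    rcases hpd with hR2pd | hapd
    · exact eq_zero_of_dotProduct_mulVec_self_eq_zero hR2pd (by linarith)
    · funext j
      have hterm := (Finset.sum_eq_zero_iff_of_nonpos h₃).mp (by linarith) j (Finset.mem_univ j)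
      have haj : 0 < a j x := by simpa using hapd.diag_pos (i := j)
      have : w j * v j = 0 := by
        rw [← mul_right_inj' haj.ne', mul_zero, ← hterm]; ring
      rcases mul_eq_zero.mp this with hwj | hvj
      · exact hwj
      · simp [w, hvj]
  exact ⟨eq_zero_of_dotProduct_mulVec_self_eq_zero hR1 (by linarith), fun j =>
    ⟨hv j, congrFun hw j⟩⟩

lemma grad_dotProduct_vecF_eq_zero_of_isKKTWithNegV (hQ : IsUnit (matQ h g x).det)
    (hKKT : IsKKTWithNegV θ h g x) :
    grad θ x ⬝ᵥ vecF θ h g R1 R2 a b c p x = 0 := by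
  obtain ⟨hu, hv⟩ := hKKT
  have hw : (fun j => g j x * vecv θ h g x j) = 0 := funext fun j => (hv j).2
  have ha_sum : ∑ j, a j x * g j x * vecv θ h g x j ^ 2 = 0 := Finset.sum_eq_zero fun j _ => by
    rw [mul_assoc, sq, ← mul_assoc (g j x), (hv j).2, zero_mul, mul_zero]
  have hbc_sum : ∑ j, (b j x + c j x * max 0 (vecv θ h g x j) ^ (2 * p j))
      * max 0 (vecv θ h g x j) ^ 2 = 0 := Finset.sum_eq_zero fun j _ => by
    rw [max_eq_left (hv j).1]; ring
  rw [grad_dotProduct_vecF hQ, hu, hw, ha_sum, hbc_sum]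
  simp

end KKT

section feasible

variable {n m k : ℕ} {θ : (Fin n → ℝ) → ℝ} {h : Fin m → (Fin n → ℝ) → ℝ}
  {g : Fin k → (Fin n → ℝ) → ℝ} {x : Fin n → ℝ}
  {R1 : (Fin n → ℝ) → Matrix (Fin n) (Fin n) ℝ} {R2 : (Fin n → ℝ) → Matrix (Fin k) (Fin k) ℝ}
  {a b c : Fin k → (Fin n → ℝ) → ℝ} {p : Fin k → ℕ}

lemma isClosed_feas (hh : ∀ i, Continuous (h i)) (hg : ∀ j, Continuous (g j)) :
    IsClosed (feas h g) := by
  simp only [feas, ofPred_and, ofPred_forall]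
  exact (isClosed_iInter fun i => isClosed_eq (hh i) continuous_const).inter
    (isClosed_iInter fun j => isClosed_le (hg j) continuous_const)

lemma isUnit_det_matA_mul_transpose (hH2 : hypH2 h g) (hx : x ∈ feas h g) :
    IsUnit (matA h x * (matA h x)ᵀ).det :=
  (posDef_mul_transpose_self ((hH2 x hx).comp Sum.inl Sum.inl_injective)).det_pos.ne'.isUnit

lemma isUnit_det_matQ (hH2 : hypH2 h g) (hx : x ∈ feas h g) : IsUnit (matQ h g x).det :=
  (posDef_mul_kerProj_mul_transpose_sub_diagonal hx.2 (hH2 x hx)).det_pos.ne'.isUnit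

lemma grad_dotProduct_vecF_eq_zero_of_mem_KKTset (hH2 : hypH2 h g) (hx : x ∈ KKTset θ h g) :
    grad θ x ⬝ᵥ vecF θ h g R1 R2 a b c p x = 0 :=
  grad_dotProduct_vecF_eq_zero_of_isKKTWithNegV (isUnit_det_matQ hH2 hx.1)
    ((mem_KKTset_iff hx.1 (isUnit_det_matA_mul_transpose hH2 hx.1)
      (isUnit_det_matQ hH2 hx.1)).1 hx)

lemma mem_KKTset_of_grad_dotProduct_vecF_eq_zero (hH2 : hypH2 h g) (hx : x ∈ feas h g)
    (hR1 : (R1 x).PosDef) (hR2 : (R2 x).PosSemidef) (ha : ∀ j, 0 ≤ a j x)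
    (hb : ∀ j, 0 ≤ b j x) (hc : ∀ j, 0 ≤ c j x) (hbc : ∀ j, 0 < b j x + c j x)
    (hpd : (R2 x).PosDef ∨ (diagonal fun j => a j x).PosDef)
    (hG : grad θ x ⬝ᵥ vecF θ h g R1 R2 a b c p x = 0) :
    x ∈ KKTset θ h g :=
  (mem_KKTset_iff hx (isUnit_det_matA_mul_transpose hH2 hx) (isUnit_det_matQ hH2 hx)).2
    (isKKTWithNegV_of_grad_dotProduct_vecF_eq_zero hx (isUnit_det_matQ hH2 hx) hR1 hR2 ha hb hc
      hbc hpd hG)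

end feasible

theorem ContinuousAt.matrix_inv {X ι : Type*} [TopologicalSpace X] [Fintype ι] [DecidableEq ι]
    {f : X → Matrix ι ι ℝ} {x₀ : X} (hf : ContinuousAt f x₀) (hdet : (f x₀).det ≠ 0) :
    ContinuousAt (fun x => (f x)⁻¹) x₀ := by
  refine (continuousAt_matrix_inv (f x₀) ?_).comp hf
  rw [Ring.inverse_eq_inv']
  exact continuousAt_inv₀ hdet

section continuity

variable {n m k : ℕ} {θ : (Fin n → ℝ) → ℝ} {h : Fin m → (Fin n → ℝ) → ℝ}
  {g : Fin k → (Fin n → ℝ) → ℝ} {x : Fin n → ℝ}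
  {R1 : (Fin n → ℝ) → Matrix (Fin n) (Fin n) ℝ} {R2 : (Fin n → ℝ) → Matrix (Fin k) (Fin k) ℝ}
  {a b c : Fin k → (Fin n → ℝ) → ℝ} {p : Fin k → ℕ}

lemma continuous_grad {f : (Fin n → ℝ) → ℝ} (hf : ContDiff ℝ 1 f) : Continuous (grad f) :=
  continuous_pi fun j =>
    (ContinuousLinearMap.apply ℝ ℝ (Pi.single j 1)).continuous.comp
      (hf.continuous_fderiv one_ne_zero)

lemma continuous_matA (hh : ∀ i, ContDiff ℝ 1 (h i)) : Continuous (matA h) :=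
  continuous_matrix fun i j => (continuous_apply j).comp (continuous_grad (hh i))

lemma continuous_matB (hg : ∀ j, ContDiff ℝ 1 (g j)) : Continuous (matB g) :=
  continuous_matrix fun i j => (continuous_apply j).comp (continuous_grad (hg i))

lemma continuousAt_grad_dotProduct_vecF (hθ : ContDiff ℝ 1 θ) (hh : ∀ i, ContDiff ℝ 1 (h i))
    (hg : ∀ j, ContDiff ℝ 1 (g j)) (hR1 : Continuous R1) (hR2 : Continuous R2)
    (ha : ∀ j, Continuous (a j)) (hb : ∀ j, Continuous (b j)) (hc : ∀ j, Continuous (c j))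
    (hA : (matA h x * (matA h x)ᵀ).det ≠ 0) (hQ : (matQ h g x).det ≠ 0) :
    ContinuousAt (fun y => grad θ y ⬝ᵥ vecF θ h g R1 R2 a b c p y) x := by
  have cθ := (continuous_grad hθ).continuousAt (x := x)
  have cA := (continuous_matA hh).continuousAt (x := x)
  have cB := (continuous_matB hg).continuousAt (x := x)
  have cg : ∀ j, Continuous (g j) := fun j => (hg j).continuous
  have cAAinv := ContinuousAt.matrix_inv (f := fun y => matA h y * (matA h y)ᵀ) (by fun_prop) hA
  have cH : ContinuousAt (matH h) x := by unfold matH; fun_prop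
  have cQ : ContinuousAt (matQ h g) x := by unfold matQ; fun_prop
  have cQinv := cQ.matrix_inv hQ
  have cP : ContinuousAt (matP h g) x := by unfold matP; fun_prop
  have cv : ContinuousAt (vecv θ h g) x := by unfold vecv; fun_prop
  have cvPos : ∀ j, ContinuousAt (fun y => max 0 (vecv θ h g y j)) x := fun j =>
    continuousAt_const.max ((continuous_apply j).continuousAt.comp cv)
  have cpPart : ContinuousAt (fun y j => max 0 (vecv θ h g y j)) x := continuousAt_pi.2 cvPos
  have cR3 : ContinuousAt (fun y j => b j y + c j y * max 0 (vecv θ h g y j) ^ (2 * p j)) x :=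
    continuousAt_pi.2 fun j => by fun_prop
  unfold vecF matR3 pPart
  fun_prop

end continuity

section sufficientDescent

variable {X : Type*} [PseudoMetricSpace X]

theorem nonneg_of_sufficient_descent {θ G : X → ℝ} {x : ℕ → X} {s : ℕ → ℝ} {c : ℝ}
    {φ : ℕ → ℕ} {xstar : X} (hc : 0 < c) (hs : ∀ i, 0 ≤ s i) (hG : ∀ i, G (x i) ≤ 0)
    (hdesc : ∀ i, θ (x (i + 1)) ≤ θ (x i) + c * s i * G (x i))
    (hstep : ∀ η > 0, ∃ δ > 0, ∀ i, G (x i) < 0 → (∀ y, 0 ≤ G y → η ≤ dist (x i) y) →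
      δ ≤ s i)
    (hθ : ContinuousAt θ xstar) (hGc : ContinuousAt G xstar)
    (hφ : Tendsto φ atTop atTop) (hconv : Tendsto (x ∘ φ) atTop (𝓝 xstar)) :
    0 ≤ G xstar := by
  by_contra! hneg
  set β := -G xstar / 2 with hβ_def
  have hβ : 0 < β := half_pos (neg_pos.mpr hneg)
  obtain ⟨ε, hε, hball⟩ := Metric.continuousAt_iff.mp hGc β hβ
  have hnear : ∀ y, dist y xstar < ε → G y < -β := fun y hy => by
    linarith [(abs_lt.mp (hball hy)).2]
  have hfar : ∀ y, 0 ≤ G y → ε ≤ dist y xstar := fun y hy => by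
    by_contra! hlt
    linarith [hnear y hlt]
  obtain ⟨δ, hδ, hδs⟩ := hstep (ε / 2) (half_pos hε)
  have hanti : Antitone (θ ∘ x) := antitone_nat_of_succ_le fun i => by
    show θ (x (i + 1)) ≤ θ (x i)
    have := mul_nonpos_of_nonneg_of_nonpos (mul_nonneg hc.le (hs i)) (hG i)
    linarith [hdesc i]
  have hlim : Tendsto (θ ∘ x) atTop (𝓝 (θ xstar)) :=
    (tendsto_iff_tendsto_subseq_of_antitone hanti hφ).2 (hθ.tendsto.comp hconv)
  have hdrop : ∀ᶠ t in atTop, θ (x (φ t + 1)) ≤ θ (x (φ t)) - c * δ * β := by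
    filter_upwards [hconv (Metric.ball_mem_nhds xstar (half_pos hε))] with t ht
    have ht : dist (x (φ t)) xstar < ε / 2 := ht
    have hGt : G (x (φ t)) < -β := hnear _ (by linarith)
    have hst : δ ≤ s (φ t) := hδs _ (by linarith) fun y hy => by
      linarith [hfar y hy, dist_triangle_left y xstar (x (φ t))]
    have h₁ := mul_le_mul_of_nonneg_left hGt.le (mul_nonneg hc.le (hs (φ t)))
    have h₂ := mul_le_mul_of_nonneg_right (mul_le_mul_of_nonneg_left hst hc.le) hβ.le
    linarith [hdesc (φ t)]
  have hnext : Tendsto (fun t => θ (x (φ t + 1))) atTop (𝓝 (θ xstar)) :=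
    hlim.comp ((tendsto_add_atTop_nat 1).comp hφ)
  have := le_of_tendsto_of_tendsto hnext ((hlim.comp hφ).sub_const (c * δ * β)) hdrop
  nlinarith [mul_pos (mul_pos hc hδ) hβ]

end sufficientDescent

lemma dist_toLp_eq_sqrt {n : ℕ} (u w : Fin n → ℝ) :
    dist (WithLp.toLp 2 u) (WithLp.toLp 2 w) = Real.sqrt (∑ j, (u j - w j) ^ 2) := by
  simp [EuclideanSpace.dist_eq, Real.dist_eq, sq_abs]

theorem nonneg_of_sufficient_descent_euclidean {n : ℕ} {θ G : (Fin n → ℝ) → ℝ}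
    {x : ℕ → Fin n → ℝ} {s : ℕ → ℝ} {c : ℝ} {φ : ℕ → ℕ} {xstar : Fin n → ℝ} (hc : 0 < c)
    (hs : ∀ i, 0 ≤ s i) (hG : ∀ i, G (x i) ≤ 0)
    (hdesc : ∀ i, θ (x (i + 1)) ≤ θ (x i) + c * s i * G (x i))
    (hstep : ∀ η > 0, ∃ δ > 0, ∀ i, G (x i) < 0 →
      (∀ y, 0 ≤ G y → η ≤ Real.sqrt (∑ j, (x i j - y j) ^ 2)) → δ ≤ s i)
    (hθ : ContinuousAt θ xstar) (hGc : ContinuousAt G xstar)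
    (hφ : Tendsto φ atTop atTop) (hconv : Tendsto (x ∘ φ) atTop (𝓝 xstar)) :
    0 ≤ G xstar := by
  have hofLp := (PiLp.continuous_ofLp 2 fun _ : Fin n => ℝ).continuousAt
    (x := WithLp.toLp 2 xstar)
  refine nonneg_of_sufficient_descent (θ := θ ∘ WithLp.ofLp) (G := G ∘ WithLp.ofLp)
    (x := WithLp.toLp 2 ∘ x) hc hs hG hdesc (fun η hη => ?_) (hθ.comp hofLp) (hGc.comp hofLp) hφ
    (((PiLp.continuous_toLp 2 _).tendsto xstar).comp hconv)
  obtain ⟨δ, hδ, hδs⟩ := hstep η hη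
  exact ⟨δ, hδ, fun i hGi hfar => hδs i hGi fun y hy => by
    rw [← dist_toLp_eq_sqrt]; exact hfar (WithLp.toLp 2 y) hy⟩

theorem stmt_17_general
    {n m k : ℕ}
    (θ : (Fin n → ℝ) → ℝ) (h : Fin m → (Fin n → ℝ) → ℝ) (g : Fin k → (Fin n → ℝ) → ℝ)
    (hθ : ContDiff ℝ 2 θ) (hhC : ∀ i, ContDiff ℝ 2 (h i)) (hgC : ∀ j, ContDiff ℝ 2 (g j))
    (hH2 : hypH2 h g)
    (R1 : (Fin n → ℝ) → Matrix (Fin n) (Fin n) ℝ)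
    (R2 : (Fin n → ℝ) → Matrix (Fin k) (Fin k) ℝ)
    (a b c : Fin k → (Fin n → ℝ) → ℝ) (p : Fin k → ℕ)
    (hR1C : ∀ i j, ContDiff ℝ 1 fun x => R1 x i j)
    (hR1pd : ∀ x, (R1 x).PosDef)
    (hR2C : ∀ i j, ContDiff ℝ 1 fun x => R2 x i j)
    (hR2psd : ∀ x, (R2 x).PosSemidef)
    (haC : ∀ j, ContDiff ℝ 1 (a j)) (hbC : ∀ j, ContDiff ℝ 1 (b j))
    (hcC : ∀ j, ContDiff ℝ 1 (c j))
    (ha0 : ∀ j x, 0 ≤ a j x) (hb0 : ∀ j x, 0 ≤ b j x) (hc0 : ∀ j x, 0 ≤ c j x)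
    (hbc : ∀ x ∈ feas h g, ∀ j, 0 < b j x + c j x)
    (hpd : ∀ x ∈ feas h g, (R2 x).PosDef ∨ (Matrix.diagonal fun j => a j x).PosDef)
    (lam : ℝ) (hlam : 0 < lam ∧ lam < 1) (r : ℝ)
    (x₀ : Fin n → ℝ)
    (x : ℕ → (Fin n → ℝ)) (hxS : ∀ i, x i ∈ feas h g)
    (s : ℕ → ℝ) (hs : ∀ i, s i ∈ Set.Icc (0 : ℝ) r)
    (hdesc : ∀ i, θ (x (i + 1)) ≤ θ (x i) +
      lam * s i * (grad θ (x i) ⬝ᵥ vecF θ h g R1 R2 a b c p (x i)))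
    (hstep : ∀ η : ℝ, 0 < η → ∃ δ : ℝ, 0 < δ ∧ ∀ i : ℕ,
      x i ∉ KKTset θ h g →
      (∀ y ∈ {y ∈ KKTset θ h g | θ y ≤ θ x₀},
        η ≤ Real.sqrt (∑ j, (x i j - y j) ^ 2)) →
      δ ≤ s i) :
    ∀ xstar : Fin n → ℝ,
      (∃ φ : ℕ → ℕ, StrictMono φ ∧
        Filter.Tendsto (fun i => x (φ i)) Filter.atTop (nhds xstar)) →
      xstar ∈ KKTset θ h g := by
  rintro xstar ⟨φ, hφ, hconv⟩
  set G : (Fin n → ℝ) → ℝ := fun y => grad θ y ⬝ᵥ vecF θ h g R1 R2 a b c p y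
  have hxstar : xstar ∈ feas h g := (isClosed_feas (fun i => (hhC i).continuous)
    (fun j => (hgC j).continuous)).mem_of_tendsto hconv (.of_forall fun t => hxS (φ t))
  have hGnonpos : ∀ y ∈ feas h g, G y ≤ 0 := fun y hy =>
    grad_dotProduct_vecF_nonpos hy (isUnit_det_matQ hH2 hy) (hR1pd y).posSemidef (hR2psd y)
      (ha0 · y) (hb0 · y) (hc0 · y)
  have hGcont : ContinuousAt G xstar :=
    continuousAt_grad_dotProduct_vecF (hθ.of_le one_le_two) (fun i => (hhC i).of_le one_le_two)
      (fun j => (hgC j).of_le one_le_two) (continuous_matrix fun i j => (hR1C i j).continuous)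
      (continuous_matrix fun i j => (hR2C i j).continuous) (fun j => (haC j).continuous)
      (fun j => (hbC j).continuous) (fun j => (hcC j).continuous)
      (isUnit_det_matA_mul_transpose hH2 hxstar).ne_zero (isUnit_det_matQ hH2 hxstar).ne_zero
  have hGstar : 0 ≤ G xstar := by
    refine nonneg_of_sufficient_descent_euclidean hlam.1 (fun i => (hs i).1)
      (fun i => hGnonpos (x i) (hxS i)) hdesc (fun η hη => ?_) hθ.continuous.continuousAt hGcont
      hφ.tendsto_atTop hconv
    have hGKKT : ∀ y ∈ KKTset θ h g, G y = 0 := fun y hy =>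
      grad_dotProduct_vecF_eq_zero_of_mem_KKTset hH2 hy
    obtain ⟨δ, hδ, hδs⟩ := hstep η hη
    exact ⟨δ, hδ, fun i hGi hfar => hδs i (fun hK => hGi.ne (hGKKT _ hK))
      fun y hy => hfar y (hGKKT y hy.1).ge⟩
  exact mem_KKTset_of_grad_dotProduct_vecF_eq_zero hH2 hxstar (hR1pd xstar) (hR2psd xstar)
    (ha0 · xstar) (hb0 · xstar) (hc0 · xstar) (hbc xstar hxstar) (hpd xstar hxstar)
    (le_antisymm (hGnonpos xstar hxstar) hGstar)

/-- Global convergence of the descent algorithm (core of Theorem 3.1): under the stated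
step-size and descent conditions, every accumulation point of the sequence `(x_i)`
is a KKT point. Here `dist(x, Φ̃) ≥ η` is expressed as `η ≤ |x − y|` (Euclidean) for
all `y ∈ Φ̃ = {y ∈ Φ : θ(y) ≤ θ(x₀)}`. -/
theorem stmt_17
    {n m k : ℕ} (hmn : m < n)
    (θ : (Fin n → ℝ) → ℝ) (h : Fin m → (Fin n → ℝ) → ℝ) (g : Fin k → (Fin n → ℝ) → ℝ)
    (hθ : ContDiff ℝ 2 θ) (hhC : ∀ i, ContDiff ℝ 2 (h i)) (hgC : ∀ j, ContDiff ℝ 2 (g j))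
    (hH1 : hypH1 θ h g) (hH2 : hypH2 h g)
    (R1 : (Fin n → ℝ) → Matrix (Fin n) (Fin n) ℝ)
    (R2 : (Fin n → ℝ) → Matrix (Fin k) (Fin k) ℝ)
    (a b c : Fin k → (Fin n → ℝ) → ℝ) (p : Fin k → ℕ)
    (hR1C : ∀ i j, ContDiff ℝ 1 fun x => R1 x i j)
    (hR1pd : ∀ x, (R1 x).PosDef)
    (hR2C : ∀ i j, ContDiff ℝ 1 fun x => R2 x i j)
    (hR2psd : ∀ x, (R2 x).PosSemidef)
    (haC : ∀ j, ContDiff ℝ 1 (a j)) (hbC : ∀ j, ContDiff ℝ 1 (b j))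
    (hcC : ∀ j, ContDiff ℝ 1 (c j))
    (ha0 : ∀ j x, 0 ≤ a j x) (hb0 : ∀ j x, 0 ≤ b j x) (hc0 : ∀ j x, 0 ≤ c j x)
    (hbc : ∀ x ∈ feas h g, ∀ j, 0 < b j x + c j x)
    (hpd : ∀ x ∈ feas h g, (R2 x).PosDef ∨ (Matrix.diagonal fun j => a j x).PosDef)
    (hp : ∀ j, 1 ≤ p j)
    (lam : ℝ) (hlam : 0 < lam ∧ lam < 1) (r : ℝ) (hr : 0 < r)
    (x₀ : Fin n → ℝ) (hx₀ : x₀ ∈ feas h g)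
    (hPhit : {y ∈ KKTset θ h g | θ y ≤ θ x₀}.Nonempty)
    (x : ℕ → (Fin n → ℝ)) (hxS : ∀ i, x i ∈ feas h g)
    (hxlev : ∀ i, θ (x i) ≤ θ x₀)
    (s : ℕ → ℝ) (hs : ∀ i, s i ∈ Set.Icc (0 : ℝ) r)
    (hdesc : ∀ i, θ (x (i + 1)) ≤ θ (x i) +
      lam * s i * (grad θ (x i) ⬝ᵥ vecF θ h g R1 R2 a b c p (x i)))
    (hstep : ∀ η : ℝ, 0 < η → ∃ δ : ℝ, 0 < δ ∧ ∀ i : ℕ,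
      x i ∉ KKTset θ h g →
      (∀ y ∈ {y ∈ KKTset θ h g | θ y ≤ θ x₀},
        η ≤ Real.sqrt (∑ j, (x i j - y j) ^ 2)) →
      δ ≤ s i) :
    ∀ xstar : Fin n → ℝ,
      (∃ φ : ℕ → ℕ, StrictMono φ ∧
        Filter.Tendsto (fun i => x (φ i)) Filter.atTop (nhds xstar)) →
      xstar ∈ KKTset θ h g :=
  stmt_17_general θ h g hθ hhC hgC hH2 R1 R2 a b c p hR1C hR1pd hR2C hR2psd haC hbC hcC ha0 hb0 hc0
    hbc hpd lam hlam r x₀ x hxS s hs hdesc hstep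

end
end

section
/- Step-size feasibility estimate (key inequality of Remark 3.5): Let g ≤ 0, ω ∈ ℝ, M ≥ 0, β ≥ 0, q > 0, Q > 0, r > 0, and K ∈ ℝ with K ≤ −g·q + Q·β·M. Then for every s with 0 ≤ s ≤ min(r, (ω + √(ω² + 2q))/q, 2/Q), it holds that g + s(g·ω − β·M) + (s²/2)·K ≤ 0. (Applied with g = g_j(x) ≤ 0, ω = ω_j(x), M = max(0, v_j(x)), β = b_j(x) + c_j(x)(max(0, v_j(x)))^{2p_j}, and K a Taylor remainder bound K_j(x) satisfying g_j(x + sF(x)) ≤ g_j(x) + s∇g_j(x)F(x) + (s²/2)K_j(x) together with the identity ∇g_j(x)F(x) = g_j(x)ω_j(x) − β·M, this yields that g_j(x + sF(x)) ≤ 0 for all step sizes s in the stated range, which is inequality (3.14) under condition (3.15).) -/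
/-! The bound on `K` splits the quadratic into
`g·(1 + sω − s²q/2) + βM·(s²Q/2 − s)`. The first factor `1 + sω − s²q/2` is nonnegative between
its roots `(ω ± √(ω² + 2q))/q`, whose smaller one is `≤ 0`; the second factor `s(sQ/2 − 1)` is
nonpositive for `0 ≤ s ≤ 2/Q`. With `g ≤ 0` and `βM ≥ 0` both products are nonpositive. -/

open Real

lemma one_add_mul_sub_sq_div_two_nonneg {ω q s : ℝ} (hq : 0 < q) (hs : 0 ≤ s)
    (hs_root : s ≤ (ω + √(ω ^ 2 + 2 * q)) / q) :
    0 ≤ 1 + s * ω - s ^ 2 * q / 2 := by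
  set t := √(ω ^ 2 + 2 * q)
  have ht_sq : t ^ 2 = ω ^ 2 + 2 * q := sq_sqrt (by positivity)
  have h_lower_root : ω - t ≤ 0 := sub_nonpos.mpr <| le_sqrt_of_sq_le (by linarith)
  have h_upper : q * s ≤ ω + t := by rw [le_div_iff₀ hq] at hs_root; linarith
  have h_factor : 1 + s * ω - s ^ 2 * q / 2 = (ω + t - q * s) * (q * s - (ω - t)) / (2 * q) := by
    field_simp
    linear_combination (-1 : ℝ) * ht_sq
  rw [h_factor]
  have hqs : 0 ≤ q * s := mul_nonneg hq.le hs
  exact div_nonneg (mul_nonneg (by linarith) (by linarith)) (by positivity)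

lemma sq_mul_div_two_sub_nonpos {Q s : ℝ} (hQ : 0 < Q) (hs : 0 ≤ s) (hs_le : s ≤ 2 / Q) :
    s ^ 2 * Q / 2 - s ≤ 0 := by
  have hsQ : s * Q ≤ 2 := (le_div_iff₀ hQ).mp hs_le
  nlinarith

theorem stmt_19_general (g ω M β q Q r K : ℝ)
    (hg : g ≤ 0) (hM : 0 ≤ M) (hβ : 0 ≤ β) (hq : 0 < q) (hQ : 0 < Q)
    (hK : K ≤ -g * q + Q * β * M) :
    ∀ s : ℝ, 0 ≤ s →
      s ≤ min r (min ((ω + Real.sqrt (ω ^ 2 + 2 * q)) / q) (2 / Q)) →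
      g + s * (g * ω - β * M) + s ^ 2 / 2 * K ≤ 0 := by
  intro s hs hs_min
  have hs_root : s ≤ (ω + √(ω ^ 2 + 2 * q)) / q :=
    hs_min.trans <| (min_le_right _ _).trans (min_le_left _ _)
  have hs_Q : s ≤ 2 / Q := hs_min.trans <| (min_le_right _ _).trans (min_le_right _ _)
  have h_first : g * (1 + s * ω - s ^ 2 * q / 2) ≤ 0 :=
    mul_nonpos_of_nonpos_of_nonneg hg (one_add_mul_sub_sq_div_two_nonneg hq hs hs_root)
  have h_second : β * M * (s ^ 2 * Q / 2 - s) ≤ 0 :=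
    mul_nonpos_of_nonneg_of_nonpos (mul_nonneg hβ hM) (sq_mul_div_two_sub_nonpos hQ hs hs_Q)
  have h_K : s ^ 2 / 2 * K ≤ s ^ 2 / 2 * (-g * q + Q * β * M) :=
    mul_le_mul_of_nonneg_left hK (by positivity)
  linear_combination h_K + h_first + h_second

/-- Step-size feasibility estimate (key inequality of Remark 3.5): if `g ≤ 0`, `M ≥ 0`,
`β ≥ 0`, `q > 0`, `Q > 0`, `r > 0` and `K ≤ −g·q + Q·β·M`, then for every
`0 ≤ s ≤ min(r, (ω + √(ω² + 2q))/q, 2/Q)` one has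
`g + s(g·ω − β·M) + (s²/2)·K ≤ 0`. -/
theorem stmt_19 (g ω M β q Q r K : ℝ)
    (hg : g ≤ 0) (hM : 0 ≤ M) (hβ : 0 ≤ β) (hq : 0 < q) (hQ : 0 < Q) (hr : 0 < r)
    (hK : K ≤ -g * q + Q * β * M) :
    ∀ s : ℝ, 0 ≤ s →
      s ≤ min r (min ((ω + Real.sqrt (ω ^ 2 + 2 * q)) / q) (2 / Q)) →
      g + s * (g * ω - β * M) + s ^ 2 / 2 * K ≤ 0 :=
  stmt_19_general g ω M β q Q r K hg hM hβ hq hQ hK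
end
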